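/- arXiv:0805.2696 — 8 statements merged into one kernel-verified Lean document; each statement's English description precedes it below -/
import Mathlib

section
/- Let F_q be a finite field and A, B ⊆ F_q with |A|·|B| > q. Then there exists ξ ∈ F_q* (nonzero) such that the number of quadruples (a₁, b₁, a₂, b₂) ∈ A × B × A × B with a₁ + ξb₁ = a₂ + ξb₂ is strictly less than (2/q)·|A|²·|B|². -/
open Finset

lemma stmt_1_aux {F : Type*} [Field F] [Fintype F] [DecidableEq F] (q : ℕ)
    (hq : Fintype.card F = q) (a1 b1 a2 b2 : F) :
    ((Finset.univ.filter (fun ξ : F => ξ ≠ 0)).filter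
      (fun ξ => a1 + ξ * b1 = a2 + ξ * b2)).card ≤
      if a1 = a2 then (if b1 = b2 then q - 1 else 0) else 1 := by
  have hScard : (Finset.univ.filter (fun ξ : F => ξ ≠ 0)).card = q - 1 := by
    rw [Finset.filter_ne', Finset.card_erase_of_mem (Finset.mem_univ _),
      Finset.card_univ, hq]
  split_ifs with h1 h2
  · exact le_trans (Finset.card_filter_le _ _) (le_of_eq hScard)
  · rw [Finset.card_eq_zero.mpr]
    rw [Finset.filter_eq_empty_iff]
    intro ξ hξ
    simp only [Finset.mem_filter, Finset.mem_univ, true_and] at hξ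
    subst h1
    intro heq
    have : ξ * b1 = ξ * b2 := by linear_combination heq
    exact h2 (mul_left_cancel₀ hξ this)
  · apply Finset.card_le_one.mpr
    intro ξ hξ ξ' hξ'
    simp only [Finset.mem_filter, Finset.mem_univ, true_and] at hξ hξ'
    have hb : b1 - b2 ≠ 0 := by
      intro hb
      apply h1
      have hb' : b1 = b2 := by linear_combination hb
      subst hb'
      linear_combination hξ.2
    have e1 : ξ * (b1 - b2) = a2 - a1 := by linear_combination hξ.2
    have e2 : ξ' * (b1 - b2) = a2 - a1 := by linear_combination hξ'.2
    exact mul_right_cancel₀ hb (e1.trans e2.symm)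

theorem stmt_1 {F : Type*} [Field F] [Fintype F] [DecidableEq F] (q : ℕ)
    (hq : Fintype.card F = q) (A B : Finset F) (h : q < A.card * B.card) :
    ∃ ξ : F, ξ ≠ 0 ∧
      ((((A ×ˢ B) ×ˢ (A ×ˢ B)).filter
        (fun p => p.1.1 + ξ * p.1.2 = p.2.1 + ξ * p.2.2)).card : ℚ) <
        2 / q * (A.card : ℚ) ^ 2 * (B.card : ℚ) ^ 2 := by
  classical
  set a := A.card with ha
  set b := B.card with hb
  have hq2 : 2 ≤ q := by rw [← hq]; exact Fintype.one_lt_card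
  have haq : a ≤ q := by rw [← hq, ha]; exact A.card_le_univ.trans_eq (by simp)
  have hbq : b ≤ q := by rw [← hq, hb]; exact B.card_le_univ.trans_eq (by simp)
  have ha2 : 2 ≤ a := by
    rcases Nat.lt_or_ge a 2 with hc | hc
    · interval_cases a <;> omega
    · exact hc
  have hb2 : 2 ≤ b := by
    rcases Nat.lt_or_ge b 2 with hc | hc
    · interval_cases b <;> omega
    · exact hc
  set S := Finset.univ.filter (fun ξ : F => ξ ≠ 0) with hS
  have hScard : S.card = q - 1 := by
    rw [hS, Finset.filter_ne', Finset.card_erase_of_mem (Finset.mem_univ _),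
      Finset.card_univ, hq]
  have hSne : S.Nonempty := by
    rw [← Finset.card_pos, hScard]; omega
  set T := (A ×ˢ B) ×ˢ (A ×ˢ B) with hT
  set E := fun ξ : F => (T.filter
    (fun p => p.1.1 + ξ * p.1.2 = p.2.1 + ξ * p.2.2)).card with hE
  have hswap : ∑ ξ ∈ S, E ξ = ∑ p ∈ T,
      (S.filter (fun ξ => p.1.1 + ξ * p.1.2 = p.2.1 + ξ * p.2.2)).card := by
    simp_rw [hE, Finset.card_filter]
    exact Finset.sum_comm
  have hbound : ∑ p ∈ T,
      (S.filter (fun ξ => p.1.1 + ξ * p.1.2 = p.2.1 + ξ * p.2.2)).card ≤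
      a * (b * ((q - 1) + (a - 1) * b)) := by
    calc ∑ p ∈ T, (S.filter (fun ξ => p.1.1 + ξ * p.1.2 = p.2.1 + ξ * p.2.2)).card
        ≤ ∑ p ∈ T, (if p.1.1 = p.2.1 then (if p.1.2 = p.2.2 then q - 1 else 0) else 1) := by
          apply Finset.sum_le_sum
          intro p _
          exact stmt_1_aux q hq p.1.1 p.1.2 p.2.1 p.2.2
      _ = ∑ a1 ∈ A, ∑ b1 ∈ B, ∑ a2 ∈ A, ∑ b2 ∈ B,
            (if a1 = a2 then (if b1 = b2 then q - 1 else 0) else 1) := by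
          rw [hT]
          simp_rw [Finset.sum_product]
      _ = ∑ a1 ∈ A, ∑ b1 ∈ B, ∑ a2 ∈ A, (if a1 = a2 then q - 1 else b) := by
          apply Finset.sum_congr rfl; intro a1 _
          apply Finset.sum_congr rfl; intro b1 hb1
          apply Finset.sum_congr rfl; intro a2 _
          split_ifs with h1
          · rw [Finset.sum_ite_eq, if_pos hb1]
          · simp [hb]
      _ = ∑ a1 ∈ A, ∑ b1 ∈ B, ((q - 1) + (a - 1) * b) := by
          apply Finset.sum_congr rfl; intro a1 ha1
          apply Finset.sum_congr rfl; intro b1 _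
          rw [← Finset.add_sum_erase A _ ha1, if_pos rfl]
          congr 1
          rw [Finset.sum_ite_of_false, Finset.sum_const, smul_eq_mul,
            Finset.card_erase_of_mem ha1]
          intro x hx
          exact fun hc => (Finset.mem_erase.mp hx).1 hc.symm
      _ = a * (b * ((q - 1) + (a - 1) * b)) := by
          rw [Finset.sum_const, Finset.sum_const, smul_eq_mul, smul_eq_mul]
  obtain ⟨ξ, hξS, hmin⟩ := S.exists_min_image E hSne
  have hξ0 : ξ ≠ 0 := by
    rw [hS] at hξS
    exact (Finset.mem_filter.mp hξS).2
  refine ⟨ξ, hξ0, ?_⟩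
  have hkey : (q - 1) * E ξ ≤ a * (b * ((q - 1) + (a - 1) * b)) := by
    have hsg : S.card * E ξ ≤ ∑ ξ' ∈ S, E ξ' := by
      have := Finset.card_nsmul_le_sum S E (E ξ) (fun x hx => hmin x hx)
      simpa [smul_eq_mul] using this
    calc (q - 1) * E ξ = S.card * E ξ := by rw [hScard]
      _ ≤ ∑ ξ' ∈ S, E ξ' := hsg
      _ = _ := hswap
      _ ≤ _ := hbound
  -- now cast to ℚ
  have hq1 : (1:ℕ) ≤ q := by omega
  have ha1 : (1:ℕ) ≤ a := by omega
  have hkeyQ : ((q:ℚ) - 1) * (E ξ : ℚ) ≤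
      (a:ℚ) * ((b:ℚ) * (((q:ℚ) - 1) + ((a:ℚ) - 1) * (b:ℚ))) := by
    have := hkey
    have h1 : ((q - 1 : ℕ) : ℚ) = (q:ℚ) - 1 := by
      push_cast [Nat.cast_sub hq1]; ring
    have h2 : ((a - 1 : ℕ) : ℚ) = (a:ℚ) - 1 := by
      push_cast [Nat.cast_sub ha1]; ring
    calc ((q:ℚ) - 1) * (E ξ : ℚ) = ((q - 1 : ℕ) : ℚ) * ((E ξ : ℕ) : ℚ) := by rw [h1]
      _ = (((q - 1) * E ξ : ℕ) : ℚ) := by push_cast; ring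
      _ ≤ ((a * (b * ((q - 1) + (a - 1) * b)) : ℕ) : ℚ) := by exact_mod_cast hkey
      _ = (a:ℚ) * ((b:ℚ) * (((q:ℚ) - 1) + ((a:ℚ) - 1) * (b:ℚ))) := by
          push_cast [Nat.cast_sub hq1, Nat.cast_sub ha1]; ring
  have hQ0 : (0:ℚ) < (q:ℚ) := by positivity
  have hQ1 : (0:ℚ) < (q:ℚ) - 1 := by
    have : (2:ℚ) ≤ (q:ℚ) := by exact_mod_cast hq2
    linarith
  have hxy : (q:ℚ) + 1 ≤ (a:ℚ) * (b:ℚ) := by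
    have : q + 1 ≤ a * b := h
    exact_mod_cast this
  have hx2 : (2:ℚ) ≤ (a:ℚ) := by exact_mod_cast ha2
  have hy2 : (2:ℚ) ≤ (b:ℚ) := by exact_mod_cast hb2
  have hQ2 : (2:ℚ) ≤ (q:ℚ) := by exact_mod_cast hq2
  rw [← mul_lt_mul_iff_right₀ hQ1]
  apply lt_of_le_of_lt hkeyQ
  rw [show ((q:ℚ) - 1) * (2 / (q:ℚ) * (a:ℚ) ^ 2 * (b:ℚ) ^ 2) =
      (2 * ((q:ℚ) - 1) * (a:ℚ) ^ 2 * (b:ℚ) ^ 2) / (q:ℚ) by ring]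
  rw [lt_div_iff₀ hQ0]
  nlinarith [mul_nonneg (mul_nonneg (by linarith : (0:ℚ) ≤ (a:ℚ)*(b:ℚ) - ((q:ℚ)+1))
      (by linarith : (0:ℚ) ≤ (q:ℚ) - 2)) (by nlinarith : (0:ℚ) ≤ (a:ℚ)*(b:ℚ)),
    mul_pos (by linarith : (0:ℚ) < (a:ℚ)) (by linarith : (0:ℚ) < (b:ℚ)),
    mul_nonneg (mul_nonneg (by linarith : (0:ℚ) ≤ (q:ℚ)) (by linarith : (0:ℚ) ≤ (b:ℚ)-2))
      (by nlinarith : (0:ℚ) ≤ (a:ℚ)*(b:ℚ))]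
end

section
/- Let F_q be a finite field and A, B ⊆ F_q with |A|·|B| > q. Then there exists ξ ∈ F_q* such that both sets A + ξB = {a + ξb : a ∈ A, b ∈ B} and A − ξB = {a − ξb : a ∈ A, b ∈ B} have cardinality strictly greater than q/2. -/
/-!
Write `S = A ×ˢ B`, `K = #S`, and let `E ξ` count the pairs of points of `S` with the same value
of `a + ξ b`. By Cauchy–Schwarz, `K² ≤ #(A + ξB) · E ξ`. Two distinct points `(a, b)`, `(a', b')`
collide for at most one `ξ`, so `∑_{ξ ≠ 0} E ξ ≤ (q - 1) K + K² - K`, and the smallest `E ξ` with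
`ξ ≠ 0` gives `#(A + ξB) > q / 2` as soon as `2 < q < K`. Swapping `b` and `b'` shows that `A - ξB`
has the same collision count. For `q = 2`, already `#A ≥ 2` since `#A · #B > q ≥ #B`.
-/

open Finset

section Collisions

variable {α β : Type*} [DecidableEq β]

def collisionCount (s : Finset α) (f : α → β) : ℕ := #{p ∈ s ×ˢ s | f p.1 = f p.2}

theorem sq_card_le_card_image_mul_collisionCount (s : Finset α) (f : α → β) :
    #s ^ 2 ≤ #(s.image f) * collisionCount s f := by
  have hfibres : collisionCount s f = ∑ y ∈ s.image f, #{a ∈ s | f a = y} ^ 2 :=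
    calc collisionCount s f = ∑ x ∈ s, #{a ∈ s | f a = f x} := by
          rw [collisionCount, card_filter, sum_product]
          simp only [card_filter, eq_comm]
      _ = ∑ y ∈ s.image f, #{a ∈ s | f a = y} • #{a ∈ s | f a = y} :=
          sum_comp (fun y => #{a ∈ s | f a = y}) f
      _ = _ := by simp only [smul_eq_mul, sq]
  rw [card_eq_sum_card_image f s, hfibres]
  exact sq_sum_le_card_mul_sum_sq

theorem card_le_card_image_product {γ : Type*} {A : Finset α} {B : Finset γ} {b : γ} (hb : b ∈ B)
    (f : α × γ → β) (hf : Function.Injective fun a => f (a, b)) :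
    #A ≤ #((A ×ˢ B).image f) :=
  card_le_card_of_injOn _ (fun _ ha => mem_image_of_mem f (mem_product.2 ⟨ha, hb⟩)) hf.injOn

end Collisions

section Lines

variable {R : Type*} [CommRing R]

theorem eq_of_add_mul_eq_of_add_mul_eq [NoZeroDivisors R] {a b a' b' x y : R}
    (hx : a + x * b = a' + x * b') (hy : a + y * b = a' + y * b') (hxy : x ≠ y) :
    a = a' ∧ b = b' := by
  have hb : b = b' := by
    have : (x - y) * (b - b') = 0 := by linear_combination hx - hy
    simpa [sub_eq_zero, hxy] using this
  subst hb
  exact ⟨add_right_cancel hx, rfl⟩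

variable [DecidableEq R]

theorem card_filter_add_mul_eq_le_one [NoZeroDivisors R] (T : Finset R) {p p' : R × R}
    (h : p ≠ p') : #{ξ ∈ T | p.1 + ξ * p.2 = p'.1 + ξ * p'.2} ≤ 1 :=
  card_le_one.2 fun _ hx _ hy => by_contra fun hxy =>
    h (Prod.ext_iff.2 (eq_of_add_mul_eq_of_add_mul_eq (mem_filter.1 hx).2 (mem_filter.1 hy).2 hxy))

theorem sum_collisionCount_add_mul_le [NoZeroDivisors R] (S : Finset (R × R)) (T : Finset R) :
    ∑ ξ ∈ T, collisionCount S (fun p => p.1 + ξ * p.2) + #S ≤ #S * #T + #S * #S := by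
  have hsplit : ∑ ξ ∈ T, collisionCount S (fun p => p.1 + ξ * p.2)
      = ∑ p ∈ S.diag ∪ S.offDiag, #{ξ ∈ T | p.1.1 + ξ * p.1.2 = p.2.1 + ξ * p.2.2} := by
    simp only [collisionCount, card_filter, diag_union_offDiag]
    exact sum_comm
  have hdiag : ∑ p ∈ S.diag, #{ξ ∈ T | p.1.1 + ξ * p.1.2 = p.2.1 + ξ * p.2.2} ≤ #S * #T := by
    simpa only [diag_card, smul_eq_mul] using
      sum_le_card_nsmul S.diag _ _ fun _ _ => card_filter_le T _
  have hoff : ∑ p ∈ S.offDiag, #{ξ ∈ T | p.1.1 + ξ * p.1.2 = p.2.1 + ξ * p.2.2}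
      ≤ #S * #S - #S := by
    simpa only [offDiag_card, smul_eq_mul, mul_one] using
      sum_le_card_nsmul S.offDiag _ 1 fun _ hp =>
        card_filter_add_mul_eq_le_one T (mem_offDiag.1 hp).2.2
  rw [hsplit, sum_union (disjoint_diag_offDiag S)]
  have := Nat.le_mul_self #S
  omega

theorem collisionCount_product_sub_mul (A B : Finset R) (ξ : R) :
    collisionCount (A ×ˢ B) (fun p => p.1 - ξ * p.2)
      = collisionCount (A ×ˢ B) (fun p => p.1 + ξ * p.2) := by
  refine card_nbij' (fun p => ((p.1.1, p.2.2), (p.2.1, p.1.2)))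
    (fun p => ((p.1.1, p.2.2), (p.2.1, p.1.2))) ?_ ?_ (fun _ _ => rfl) (fun _ _ => rfl) <;>
  · rintro ⟨⟨a, b⟩, a', b'⟩ hp
    simp only [coe_filter, mem_product, Set.mem_ofPred_eq] at hp ⊢
    obtain ⟨⟨⟨ha, hb⟩, ha', hb'⟩, he⟩ := hp
    exact ⟨⟨⟨ha, hb'⟩, ha', hb⟩, by linear_combination he⟩

end Lines

theorem exists_ne_zero_collisionCount_le {F : Type*} [Field F] [Fintype F] [DecidableEq F]
    (S : Finset (F × F)) :
    ∃ ξ ≠ (0 : F), (Fintype.card F - 1) * collisionCount S (fun p => p.1 + ξ * p.2) + #S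
      ≤ #S * (Fintype.card F - 1) + #S * #S := by
  have hT : #(univ.erase (0 : F)) = Fintype.card F - 1 := by
    rw [card_erase_of_mem (mem_univ _), card_univ]
  obtain ⟨ξ, hξ, hmin⟩ := exists_min_image (univ.erase (0 : F))
    (fun ξ => collisionCount S (fun p => p.1 + ξ * p.2)) ⟨1, by simp⟩
  refine ⟨ξ, ne_of_mem_erase hξ, ?_⟩
  have := card_nsmul_le_sum _ _ _ hmin
  have := sum_collisionCount_add_mul_le S (univ.erase (0 : F))
  rw [hT, smul_eq_mul] at *
  omega

theorem lt_two_mul_of_collision_bounds {q K N E : ℕ} (hq : 2 < q) (hqK : q < K)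
    (hCS : K ^ 2 ≤ N * E) (hE : (q - 1) * E + K ≤ K * (q - 1) + K * K) : q < 2 * N := by
  have hE0 : 0 < E := Nat.pos_of_ne_zero fun h => by subst h; nlinarith
  qify [hq.le.trans' one_le_two] at hE ⊢
  have hq' : (2 : ℚ) < q := by exact_mod_cast hq
  have hqK' : (q : ℚ) < K := by exact_mod_cast hqK
  have hCS' : (K : ℚ) ^ 2 ≤ N * E := by exact_mod_cast hCS
  have hqE : (q : ℚ) * E < 2 * K ^ 2 := by
    nlinarith [mul_pos (mul_pos (by linarith : (0 : ℚ) < K) (by linarith : (0 : ℚ) < q - 2))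
      (by linarith : (0 : ℚ) < K - q)]
  have hE0' : (0 : ℚ) < E := by exact_mod_cast hE0
  nlinarith

theorem stmt_2 {F : Type*} [Field F] [Fintype F] [DecidableEq F] (q : ℕ)
    (hq : Fintype.card F = q) (A B : Finset F) (h : q < A.card * B.card) :
    ∃ ξ : F, ξ ≠ 0 ∧
      (q : ℚ) / 2 < (((A ×ˢ B).image (fun p => p.1 + ξ * p.2)).card : ℚ) ∧
      (q : ℚ) / 2 < (((A ×ˢ B).image (fun p => p.1 - ξ * p.2)).card : ℚ) := by
  suffices ∃ ξ : F, ξ ≠ 0 ∧ q < 2 * #((A ×ˢ B).image (fun p => p.1 + ξ * p.2)) ∧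
      q < 2 * #((A ×ˢ B).image (fun p => p.1 - ξ * p.2)) by
    obtain ⟨ξ, hξ, hadd, hsub⟩ := this
    refine ⟨ξ, hξ, ?_, ?_⟩ <;> rw [div_lt_iff₀' two_pos]
    exacts [by exact_mod_cast hadd, by exact_mod_cast hsub]
  have hB : #B ≤ q := hq ▸ card_le_univ B
  obtain ⟨b, hb⟩ : B.Nonempty := card_pos.1 (by nlinarith)
  rcases le_or_gt q 2 with hq2 | hq2
  · have hA : q < 2 * #A := by nlinarith
    refine ⟨1, one_ne_zero, hA.trans_le ?_, hA.trans_le ?_⟩ <;>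
      refine Nat.mul_le_mul_left 2 (card_le_card_image_product hb _ ?_)
    exacts [add_left_injective (1 * b), sub_left_injective (b := 1 * b)]
  · obtain ⟨ξ, hξ, hE⟩ := exists_ne_zero_collisionCount_le (A ×ˢ B)
    rw [hq, card_product] at hE
    have hadd := sq_card_le_card_image_mul_collisionCount (A ×ˢ B) (fun p => p.1 + ξ * p.2)
    have hsub := sq_card_le_card_image_mul_collisionCount (A ×ˢ B) (fun p => p.1 - ξ * p.2)
    rw [card_product] at hadd
    rw [collisionCount_product_sub_mul, card_product] at hsub
    exact ⟨ξ, hξ, lt_two_mul_of_collision_bounds hq2 h hadd hE,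
      lt_two_mul_of_collision_bounds hq2 h hsub hE⟩
end

section
/- Let F_q be a finite field and A, B ⊆ F_q with |A|·|B| > q. Suppose there exists a ∈ −A with a ∉ A + A, or there exists b ∈ −B with b ∉ B + B. Then 10·(AB) = F_q. -/
/-!
Let E(d) count the collisions of (b, a) ↦ b + d a on B × A and n = |A||B| > q. Two distinct points
of B × A collide for at most one d, so ∑_d E(d) ≤ q n + n² and some d has q E(d) ≤ q n + n².
Cauchy–Schwarz gives n² ≤ |B + dA| E(d), hence |B + dA| > q/2, and likewise |B − dA| > q/2 since
E(−d) = E(d). Two sets of total size more than q sum to all of F. For a₀ ∈ A with −a₀ ∉ A + A,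
writing d a₀ ∈ (B − dA) + (B − dA) and −d a₀ ∈ (B + dA) + (B + dA) produces nonzero
λ = a₀ + a₁ + a₂ and μ = a₀ + a₃ + a₄ with dλ, −dμ ∈ B + B; then every
x = λ(b + d a) + μ(b' − d a') is a sum of ten products from AB.
-/

open Finset

lemma sq_card_le_card_image_mul_card_collisions {α β : Type*} [DecidableEq β] (s : Finset α)
    (f : α → β) :
    #s ^ 2 ≤ #(s.image f) * #{p ∈ s ×ˢ s | f p.1 = f p.2} := by
  have h_card : #s = ∑ y ∈ s.image f, #{x ∈ s | f x = y} :=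
    card_eq_sum_card_fiberwise fun x hx => mem_image_of_mem f hx
  have h_collisions :
      #{p ∈ s ×ˢ s | f p.1 = f p.2} = ∑ y ∈ s.image f, #{x ∈ s | f x = y} ^ 2 := by
    rw [card_eq_sum_card_fiberwise (f := fun p => f p.1) (t := s.image f)
      fun p hp => mem_image_of_mem f (mem_product.1 (mem_filter.1 hp).1).1]
    refine sum_congr rfl fun y _ => ?_
    rw [sq, ← card_product]
    congr 1
    ext p
    simp only [mem_filter, mem_product]
    grind
  rw [h_card, h_collisions]
  exact sq_sum_le_card_mul_sum_sq

lemma exists_add_eq_of_card_lt_card_add_card {G : Type*} [AddGroup G] [Fintype G]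
    [DecidableEq G] {s t : Finset G} (h : Fintype.card G < #s + #t) (x : G) :
    ∃ a ∈ s, ∃ b ∈ t, a + b = x := by
  obtain ⟨a, ha⟩ : (s ∩ t.image (x - ·)).Nonempty :=
    inter_nonempty_of_card_lt_card_add_card (subset_univ _) (subset_univ _)
      (by rwa [card_image_of_injective _ sub_right_injective, card_univ])
  obtain ⟨has, hat⟩ := mem_inter.1 ha
  obtain ⟨b, hb, rfl⟩ := mem_image.1 hat
  exact ⟨_, has, b, hb, sub_add_cancel x b⟩

section Dilates

variable {R : Type*} [CommRing R] [DecidableEq R] (A B : Finset R)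

/-- For `d ≠ 0`, `dilateSum A B d = B + d • A` and `dilateEnergy A B d` is the additive energy
`E(B, d • A)`; both are indexed by `B × A`, which keeps them meaningful at `d = 0`. -/
def dilateSum (d : R) : Finset R := (B ×ˢ A).image fun p => p.1 + d * p.2

def dilateEnergy (d : R) : ℕ :=
  #{p ∈ (B ×ˢ A) ×ˢ (B ×ˢ A) | p.1.1 + d * p.1.2 = p.2.1 + d * p.2.2}

variable {A B}

lemma mem_dilateSum {d z : R} : z ∈ dilateSum A B d ↔ ∃ b ∈ B, ∃ a ∈ A, b + d * a = z := by
  simp [dilateSum, and_assoc]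

lemma sq_card_le_card_dilateSum_mul_dilateEnergy (d : R) :
    (#B * #A) ^ 2 ≤ #(dilateSum A B d) * dilateEnergy A B d := by
  have := sq_card_le_card_image_mul_card_collisions (B ×ˢ A) fun p => p.1 + d * p.2
  rwa [card_product] at this

lemma dilateEnergy_neg (d : R) : dilateEnergy A B (-d) = dilateEnergy A B d := by
  let swapB (p : (R × R) × R × R) : (R × R) × R × R := ((p.2.1, p.1.2), (p.1.1, p.2.2))
  refine card_nbij' swapB swapB ?_ ?_ (fun _ _ => rfl) (fun _ _ => rfl)
  all_goals
    rintro ⟨⟨b, a⟩, b', a'⟩ h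
    simp only [mem_coe, mem_filter, mem_product] at h ⊢
    obtain ⟨⟨⟨hb, ha⟩, hb', ha'⟩, hcol⟩ := h
    exact ⟨⟨⟨hb', ha⟩, hb, ha'⟩, by linear_combination -hcol⟩

end Dilates

lemma lt_two_mul_of_sq_le_mul_of_mul_le {q n h e : ℕ} (hqn : q < n) (hsq : n ^ 2 ≤ h * e)
    (he : q * e ≤ q * n + n ^ 2) : q < 2 * h := by
  by_contra! h2
  have h_sq : 2 * (q * n ^ 2) ≤ q * (q * n + n ^ 2) :=
    calc 2 * (q * n ^ 2) ≤ 2 * h * (q * e) := by nlinarith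
      _ ≤ 2 * h * (q * n + n ^ 2) := by gcongr
      _ ≤ q * (q * n + n ^ 2) := by gcongr
  nlinarith

section FiniteField

variable {F : Type*} [Field F] [Fintype F] [DecidableEq F] {A B : Finset F}

lemma card_filter_add_mul_eq_le_one_s6 {u v : F × F} (huv : u ≠ v) :
    #{d | u.1 + d * u.2 = v.1 + d * v.2} ≤ 1 := by
  refine card_le_one.2 fun d hd e he => ?_
  simp only [mem_filter, mem_univ, true_and] at hd he
  by_contra hde
  have h2 : u.2 = v.2 := by
    have : (d - e) * (u.2 - v.2) = 0 := by linear_combination hd - he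
    simpa [sub_eq_zero, hde] using this
  exact huv (Prod.ext (by linear_combination hd - d * h2) h2)

lemma sum_dilateEnergy_le (A B : Finset F) :
    ∑ d, dilateEnergy A B d ≤ Fintype.card F * (#B * #A) + (#B * #A) ^ 2 := by
  set S := B ×ˢ A
  calc ∑ d, dilateEnergy A B d
      = ∑ p ∈ S ×ˢ S, #{d | p.1.1 + d * p.1.2 = p.2.1 + d * p.2.2} :=
        sum_card_bipartiteAbove_eq_sum_card_bipartiteBelow _
    _ ≤ ∑ p ∈ S ×ˢ S, ((if p.1 = p.2 then Fintype.card F else 0) + 1) :=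
        sum_le_sum fun p _ => by
          split_ifs with h
          · exact (card_le_univ _).trans (Nat.le_add_right _ _)
          · simpa using card_filter_add_mul_eq_le_one_s6 h
    _ = Fintype.card F * (#B * #A) + (#B * #A) ^ 2 := by
        rw [sum_add_distrib, ← sum_filter, sum_const, ← diag_eq_filter, diag_card]
        simp only [S, card_product, smul_eq_mul, sum_const, mul_one]
        ring

lemma exists_card_dilateSum_gt (h : Fintype.card F < #A * #B) :
    ∃ d, Fintype.card F < 2 * #(dilateSum A B d) ∧
      Fintype.card F < 2 * #(dilateSum A B (-d)) := by
  set q := Fintype.card F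
  set n := #B * #A
  obtain ⟨d, -, hd⟩ : ∃ d ∈ univ, q * dilateEnergy A B d ≤ q * n + n ^ 2 := by
    refine exists_le_of_sum_le univ_nonempty ?_
    rw [← mul_sum, sum_const, card_univ, smul_eq_mul]
    exact Nat.mul_le_mul_left q (sum_dilateEnergy_le A B)
  have hqn : q < n := by simpa only [n, mul_comm] using h
  exact ⟨d,
    lt_two_mul_of_sq_le_mul_of_mul_le hqn (sq_card_le_card_dilateSum_mul_dilateEnergy d) hd,
    lt_two_mul_of_sq_le_mul_of_mul_le hqn (sq_card_le_card_dilateSum_mul_dilateEnergy (-d))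
      (by rwa [dilateEnergy_neg])⟩

lemma exists_mul_add_add_eq_add (c : F) {d : F}
    (h : Fintype.card F < 2 * #(dilateSum A B (-d))) :
    ∃ a₁ ∈ A, ∃ a₂ ∈ A, ∃ b₁ ∈ B, ∃ b₂ ∈ B, d * (c + a₁ + a₂) = b₁ + b₂ := by
  obtain ⟨s, hs, t, ht, hst⟩ := exists_add_eq_of_card_lt_card_add_card
    (s := dilateSum A B (-d)) (t := dilateSum A B (-d)) (by omega) (d * c)
  obtain ⟨b₁, hb₁, a₁, ha₁, rfl⟩ := mem_dilateSum.1 hs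
  obtain ⟨b₂, hb₂, a₂, ha₂, rfl⟩ := mem_dilateSum.1 ht
  exact ⟨a₁, ha₁, a₂, ha₂, b₁, hb₁, b₂, hb₂, by linear_combination -hst⟩

open Pointwise in
lemma exists_fin_ten_sum_mul_eq (h : Fintype.card F < #A * #B) {a₀ : F} (ha₀ : a₀ ∈ A)
    (hna₀ : -a₀ ∉ A + A) (x : F) :
    ∃ a b : Fin 10 → F, (∀ i, a i ∈ A) ∧ (∀ i, b i ∈ B) ∧ x = ∑ i, a i * b i := by
  have hsum_ne_zero : ∀ a ∈ A, ∀ a' ∈ A, a₀ + a + a' ≠ 0 := fun a ha a' ha' h0 =>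
    hna₀ (mem_add.2 ⟨a, ha, a', ha', by linear_combination h0⟩)
  obtain ⟨d, hP, hM⟩ := exists_card_dilateSum_gt h
  obtain ⟨a₁, ha₁, a₂, ha₂, b₁, hb₁, b₂, hb₂, hsum₁₂⟩ := exists_mul_add_add_eq_add a₀ hM
  obtain ⟨a₃, ha₃, a₄, ha₄, b₃, hb₃, b₄, hb₄, hsum₃₄⟩ :=
    exists_mul_add_add_eq_add a₀ (d := -d) (by rwa [neg_neg])
  obtain ⟨s, hs, t, ht, hst⟩ := exists_add_eq_of_card_lt_card_add_card
    (s := (a₀ + a₁ + a₂) • dilateSum A B d) (t := (a₀ + a₃ + a₄) • dilateSum A B (-d))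
    (by rw [card_smul_finset₀ (hsum_ne_zero _ ha₁ _ ha₂),
      card_smul_finset₀ (hsum_ne_zero _ ha₃ _ ha₄)]; omega) x
  obtain ⟨_, hp, rfl⟩ := mem_smul_finset.1 hs
  obtain ⟨_, hm, rfl⟩ := mem_smul_finset.1 ht
  obtain ⟨b₅, hb₅, a₅, ha₅, rfl⟩ := mem_dilateSum.1 hp
  obtain ⟨b₆, hb₆, a₆, ha₆, rfl⟩ := mem_dilateSum.1 hm
  refine ⟨![a₀, a₁, a₂, a₅, a₅, a₀, a₃, a₄, a₆, a₆],
    ![b₅, b₅, b₅, b₁, b₂, b₆, b₆, b₆, b₃, b₄], ?_, ?_, ?_⟩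
  · simp [Fin.forall_fin_succ, *]
  · simp [Fin.forall_fin_succ, *]
  · rw [← hst]
    simp only [Fin.sum_univ_succ, Fin.sum_univ_zero, smul_eq_mul, Matrix.cons_val_zero,
      Matrix.cons_val_succ]
    linear_combination a₅ * hsum₁₂ + a₆ * hsum₃₄

end FiniteField

open Pointwise in
theorem stmt_6 {F : Type*} [Field F] [Fintype F] [DecidableEq F] (q : ℕ)
    (hq : Fintype.card F = q) (A B : Finset F) (h : q < A.card * B.card)
    (hab : (∃ a ∈ -A, a ∉ A + A) ∨ (∃ b ∈ -B, b ∉ B + B)) :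
    ∀ x : F, ∃ a b : Fin 10 → F, (∀ i, a i ∈ A) ∧ (∀ i, b i ∈ B) ∧
      x = ∑ i, a i * b i := by
  intro x
  subst hq
  rcases hab with ⟨a, ha, hna⟩ | ⟨b, hb, hnb⟩
  · obtain ⟨a₀, ha₀, rfl⟩ := mem_neg.1 ha
    exact exists_fin_ten_sum_mul_eq h ha₀ hna x
  · obtain ⟨b₀, hb₀, rfl⟩ := mem_neg.1 hb
    obtain ⟨b, a, hb, ha, hx⟩ := exists_fin_ten_sum_mul_eq (mul_comm #A #B ▸ h) hb₀ hnb x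
    exact ⟨a, b, ha, hb, hx.trans (sum_congr rfl fun i _ => mul_comm _ _)⟩
end

section
/- Let F_q be a finite field, A, B ⊆ F_q, ξ ∈ F_q*, and suppose |A + ξB| > q/2. If there exist a₁, a₂, a₃ ∈ A and b₁, b₂ ∈ B with b₁ + b₂ ≠ 0 and ξ = (a₁ + a₂ + a₃)/(b₁ + b₂), then 10·(AB) = F_q. -/
theorem stmt_7 {F : Type*} [Field F] [Fintype F] [DecidableEq F] (q : ℕ)
    (hq : Fintype.card F = q) (A B : Finset F) (ξ : F) (hξ : ξ ≠ 0)
    (hcard : (q : ℚ) / 2 < (((A ×ˢ B).image (fun p => p.1 + ξ * p.2)).card : ℚ))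
    (hrep : ∃ a₁ ∈ A, ∃ a₂ ∈ A, ∃ a₃ ∈ A, ∃ b₁ ∈ B, ∃ b₂ ∈ B,
      b₁ + b₂ ≠ 0 ∧ ξ = (a₁ + a₂ + a₃) / (b₁ + b₂)) :
    ∀ x : F, ∃ a b : Fin 10 → F, (∀ i, a i ∈ A) ∧ (∀ i, b i ∈ B) ∧
      x = ∑ i, a i * b i := by
  obtain ⟨a₁, ha₁, a₂, ha₂, a₃, ha₃, b₁, hb₁, b₂, hb₂, hsum, hxi⟩ := hrep
  intro x
  set C := (A ×ˢ B).image (fun p => p.1 + ξ * p.2) with hC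
  have hξb : ξ * (b₁ + b₂) = a₁ + a₂ + a₃ := by
    rw [hxi]; field_simp
  have hCcard : q < 2 * C.card := by
    have h2 : (q : ℚ) < 2 * C.card := by linarith
    exact_mod_cast h2
  set s := b₁ + b₂ with hsdef
  have hs : s ≠ 0 := hsum
  set D := C.image (fun c => s * c) with hD
  set E := C.image (fun c => x - s * c) with hE
  have hDcard : D.card = C.card :=
    Finset.card_image_of_injective _ (mul_right_injective₀ hs)
  have hEcard : E.card = C.card := by
    apply Finset.card_image_of_injective
    intro u v h
    exact mul_left_cancel₀ hs (by linear_combination -h)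
  have hinter : (D ∩ E).Nonempty := by
    by_contra h
    rw [Finset.not_nonempty_iff_eq_empty, ← Finset.disjoint_iff_inter_eq_empty] at h
    have h1 := Finset.card_union_of_disjoint h
    have h2 : (D ∪ E).card ≤ q := by
      rw [← hq, ← Finset.card_univ]
      exact Finset.card_le_univ _
    omega
  obtain ⟨y, hy⟩ := hinter
  rw [Finset.mem_inter] at hy
  obtain ⟨hyD, hyE⟩ := hy
  rw [hD, Finset.mem_image] at hyD
  rw [hE, Finset.mem_image] at hyE
  obtain ⟨c₁, hc₁, hyc₁⟩ := hyD
  obtain ⟨c₂, hc₂, hyc₂⟩ := hyE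
  rw [hC, Finset.mem_image] at hc₁ hc₂
  obtain ⟨⟨a, b⟩, hab, hcab⟩ := hc₁
  obtain ⟨⟨a', b'⟩, hab', hcab'⟩ := hc₂
  rw [Finset.mem_product] at hab hab'
  obtain ⟨haA, hbB⟩ := hab
  obtain ⟨haA', hbB'⟩ := hab'
  have hx : x = s * (a + ξ * b) + s * (a' + ξ * b') := by
    rw [hcab, hcab', hyc₁]
    linear_combination hyc₂
  clear hcard hCcard hDcard hEcard hC hD hE hyc₁ hyc₂ hcab hcab' hxi hq
  clear_value s
  clear C D E
  refine ⟨![a, a, a₁, a₂, a₃, a', a', a₁, a₂, a₃],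
          ![b₁, b₂, b, b, b, b₁, b₂, b', b', b'], ?_, ?_, ?_⟩
  · intro i; fin_cases i <;> assumption
  · intro i; fin_cases i <;> assumption
  · simp only [Fin.sum_univ_succ, Fin.sum_univ_zero, Matrix.cons_val_zero,
      Matrix.cons_val_succ, add_zero]
    linear_combination hx + b * hξb + b' * hξb + (a + a') * hsdef
end

section
/- Let F_q be a finite field, A, B ⊆ F_q, ξ ∈ F_q*, and suppose |A + ξB| > q/2. If there exist a₁, a₂ ∈ A and b₁, b₂ ∈ B with b₁ + b₂ ≠ 0 and ξ = (a₁ + a₂)/(b₁ + b₂), then 8·(AB) = F_q. -/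
theorem stmt_8 {F : Type*} [Field F] [Fintype F] [DecidableEq F] (q : ℕ)
    (hq : Fintype.card F = q) (A B : Finset F) (ξ : F) (hξ : ξ ≠ 0)
    (hcard : (q : ℚ) / 2 < (((A ×ˢ B).image (fun p => p.1 + ξ * p.2)).card : ℚ))
    (hrep : ∃ a₁ ∈ A, ∃ a₂ ∈ A, ∃ b₁ ∈ B, ∃ b₂ ∈ B,
      b₁ + b₂ ≠ 0 ∧ ξ = (a₁ + a₂) / (b₁ + b₂)) :
    ∀ x : F, ∃ a b : Fin 8 → F, (∀ i, a i ∈ A) ∧ (∀ i, b i ∈ B) ∧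
      x = ∑ i, a i * b i := by
  obtain ⟨a₁, ha₁, a₂, ha₂, b₁, hb₁, b₂, hb₂, hs, hξeq⟩ := hrep
  set s := b₁ + b₂ with hsdef
  have hsξ : s * ξ = a₁ + a₂ := by
    rw [hξeq]; field_simp
  set C := (A ×ˢ B).image (fun p => p.1 + ξ * p.2) with hC
  have hqC : q < 2 * C.card := by
    have : (q : ℚ) < 2 * C.card := by linarith
    exact_mod_cast this
  intro x
  set D := C.image (fun c => s * c) with hD
  set E := C.image (fun c => x - s * c) with hE
  have hDcard : D.card = C.card :=
    Finset.card_image_of_injective _ (mul_right_injective₀ hs)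
  have hEcard : E.card = C.card := by
    apply Finset.card_image_of_injective
    intro u v huv
    simp only at huv
    have h2 : s * u = s * v := by linear_combination -huv
    exact mul_right_injective₀ hs h2
  have hinter : (D ∩ E).Nonempty := by
    rw [← Finset.card_pos]
    have h1 : (D ∪ E).card ≤ q := by
      rw [← hq]; exact Finset.card_le_univ _
    have h2 := Finset.card_union_add_card_inter D E
    omega
  obtain ⟨y, hy⟩ := hinter
  rw [Finset.mem_inter] at hy
  obtain ⟨hyD, hyE⟩ := hy
  rw [hD, Finset.mem_image] at hyD
  obtain ⟨c₁, hc₁, hyc₁⟩ := hyD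
  rw [hE, Finset.mem_image] at hyE
  obtain ⟨c₂, hc₂, hyc₂⟩ := hyE
  rw [hC, Finset.mem_image] at hc₁ hc₂
  obtain ⟨⟨a, b⟩, hab, hceq₁⟩ := hc₁
  obtain ⟨⟨a', b'⟩, hab', hceq₂⟩ := hc₂
  rw [Finset.mem_product] at hab hab'
  refine ⟨![a, a, a₁, a₂, a', a', a₁, a₂], ![b₁, b₂, b, b, b₁, b₂, b', b'], ?_, ?_, ?_⟩
  · intro i; fin_cases i <;>
      first | exact hab.1 | exact ha₁ | exact ha₂ | exact hab'.1
  · intro i; fin_cases i <;>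
      first | exact hb₁ | exact hb₂ | exact hab.2 | exact hab'.2
  · have hx : x = s * c₁ + s * c₂ := by rw [hyc₁, ← hyc₂]; ring
    have hsum : ∑ i, ![a, a, a₁, a₂, a', a', a₁, a₂] i * ![b₁, b₂, b, b, b₁, b₂, b', b'] i
        = a*b₁ + a*b₂ + a₁*b + a₂*b + a'*b₁ + a'*b₂ + a₁*b' + a₂*b' := by
      simp [Fin.sum_univ_succ]
      ring
    rw [hsum, hx, ← hceq₁, ← hceq₂]
    simp only [hsdef] at hsξ ⊢
    linear_combination (b + b') * hsξ
end

section
/- Let F_q be a finite field, A, B ⊆ F_q, ξ ∈ F_q, and suppose the number of quadruples (a₁,b₁,a₂,b₂) ∈ A×B×A×B with a₁ + ξb₁ = a₂ + ξb₂ is less than (2/q)|A|²|B|². Let A' ⊆ A and B' ⊆ B with |A'| = u|A|, |B'| = v|B|. Then |A' + ξB'| > (q/2)·(uv)². -/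
lemma fiber_energy {F : Type*} [DecidableEq F] (T : Finset (F × F)) (f : F × F → F) :
    ((T ×ˢ T).filter (fun pq => f pq.1 = f pq.2)).card
      = ∑ s ∈ T.image f, ((T.filter (fun p => f p = s)).card) ^ 2 := by
  have : (T ×ˢ T).filter (fun pq => f pq.1 = f pq.2)
      = (T.image f).biUnion
        (fun s => (T.filter (fun p => f p = s)) ×ˢ (T.filter (fun p => f p = s))) := by
    ext ⟨p, q⟩
    simp only [Finset.mem_filter, Finset.mem_product, Finset.mem_biUnion, Finset.mem_image]
    constructor
    · rintro ⟨⟨hp, hq⟩, h⟩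
      exact ⟨f p, ⟨p, hp, rfl⟩, ⟨hp, rfl⟩, hq, h.symm⟩
    · rintro ⟨s, _, ⟨hp, hps⟩, hq, hqs⟩
      exact ⟨⟨hp, hq⟩, by rw [hps, hqs]⟩
  rw [this, Finset.card_biUnion]
  · simp [Finset.card_product, sq]
  · intro s hs t ht hst
    simp only [Finset.disjoint_left]
    rintro ⟨p, q⟩ hp hq
    simp only [Finset.mem_product, Finset.mem_filter] at hp hq
    exact hst (hp.1.2 ▸ hq.1.2)

theorem stmt_13 {F : Type*} [Field F] [Fintype F] [DecidableEq F] (q : ℕ)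
    (hq : Fintype.card F = q) (A B : Finset F) (ξ : F)
    (henergy : ((((A ×ˢ B) ×ˢ (A ×ˢ B)).filter
        (fun p => p.1.1 + ξ * p.1.2 = p.2.1 + ξ * p.2.2)).card : ℚ) <
        2 / q * (A.card : ℚ) ^ 2 * (B.card : ℚ) ^ 2)
    (A' B' : Finset F) (hA' : A' ⊆ A) (hB' : B' ⊆ B) (u v : ℚ)
    (hu : 0 < u) (hu1 : u ≤ 1) (hv : 0 < v) (hv1 : v ≤ 1)
    (hcardA : (A'.card : ℚ) = u * A.card) (hcardB : (B'.card : ℚ) = v * B.card) :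
    (q : ℚ) / 2 * (u * v) ^ 2 <
      (((A' ×ˢ B').image (fun p => p.1 + ξ * p.2)).card : ℚ) := by
  set f : F × F → F := fun p => p.1 + ξ * p.2 with hf
  set T : Finset (F × F) := A' ×ˢ B' with hT
  set S : Finset F := T.image f with hS
  set E' : ℕ := ((T ×ˢ T).filter (fun pq => f pq.1 = f pq.2)).card with hE'
  -- positivity of q, |A|, |B|
  have hq0 : 0 < (q : ℚ) := by
    have : 0 < Fintype.card F := Fintype.card_pos
    rw [hq] at this
    exact_mod_cast this
  have hAB : (0 : ℚ) < 2 / q * (A.card : ℚ) ^ 2 * (B.card : ℚ) ^ 2 :=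
    lt_of_le_of_lt (by positivity) henergy
  have hA0 : (0 : ℚ) < A.card := by
    rcases Nat.eq_zero_or_pos A.card with h | h
    · simp [h] at hAB
    · exact_mod_cast h
  have hB0 : (0 : ℚ) < B.card := by
    rcases Nat.eq_zero_or_pos B.card with h | h
    · simp [h] at hAB
    · exact_mod_cast h
  -- energy monotonicity
  have hmono : E' ≤ (((A ×ˢ B) ×ˢ (A ×ˢ B)).filter
      (fun p => p.1.1 + ξ * p.1.2 = p.2.1 + ξ * p.2.2)).card := by
    apply Finset.card_le_card
    apply Finset.filter_subset_filter
    exact Finset.product_subset_product (Finset.product_subset_product hA' hB')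
      (Finset.product_subset_product hA' hB')
  have hE'lt : (E' : ℚ) < 2 / q * (A.card : ℚ) ^ 2 * (B.card : ℚ) ^ 2 :=
    lt_of_le_of_lt (by exact_mod_cast hmono) henergy
  -- Cauchy-Schwarz: (∑ r)² ≤ |S| ∑ r²
  have hsum : ∑ s ∈ S, ((T.filter (fun p => f p = s)).card : ℚ) = (T.card : ℚ) := by
    rw [← Nat.cast_sum]
    congr 1
    exact (Finset.card_eq_sum_card_image f T).symm
  have hsumsq : ∑ s ∈ S, ((T.filter (fun p => f p = s)).card : ℚ) ^ 2 = (E' : ℚ) := by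
    rw [hE', fiber_energy T f]
    push_cast
    rfl
  have hCS : ((T.card : ℚ)) ^ 2 ≤ (S.card : ℚ) * (E' : ℚ) := by
    rw [← hsum, ← hsumsq]
    exact sq_sum_le_card_mul_sum_sq
  -- |T| = |A'||B'|
  have hTcard : (T.card : ℚ) = u * A.card * (v * B.card) := by
    rw [hT, Finset.card_product]
    push_cast
    rw [hcardA, hcardB]
  -- S is nonempty since T.card > 0
  have hT0 : (0 : ℚ) < T.card := by rw [hTcard]; positivity
  have hS0 : (0 : ℚ) < S.card := by
    rcases Nat.eq_zero_or_pos S.card with h | h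
    · exfalso
      have : T = ∅ := Finset.image_eq_empty.mp (Finset.card_eq_zero.mp h)
      rw [this] at hT0; simp at hT0
    · exact_mod_cast h
  -- combine
  have key : ((T.card : ℚ)) ^ 2 < (S.card : ℚ) * (2 / q * (A.card : ℚ) ^ 2 * (B.card : ℚ) ^ 2) :=
    lt_of_le_of_lt hCS (by exact mul_lt_mul_of_pos_left hE'lt hS0)
  rw [hTcard] at key
  have key2 := mul_lt_mul_of_pos_left key hq0
  have hq' : (q : ℚ) ≠ 0 := ne_of_gt hq0
  have hsimp : (q : ℚ) * ((S.card : ℚ) * (2 / q * (A.card : ℚ) ^ 2 * (B.card : ℚ) ^ 2))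
      = (S.card : ℚ) * (2 * (A.card : ℚ) ^ 2 * (B.card : ℚ) ^ 2) := by
    field_simp
  rw [hsimp] at key2
  rw [div_mul_eq_mul_div, div_lt_iff₀ (by norm_num : (0:ℚ) < 2)]
  nlinarith [mul_pos (pow_pos hA0 2) (pow_pos hB0 2), key2]
end

section
/- Let F_q be a finite field and A, B ⊆ F_q with |A|·|B| > q. Then the average over ξ ∈ F_q* of the number of solutions (a₁,b₁,a₂,b₂) ∈ A×B×A×B to a₁ + ξb₁ = a₂ + ξb₂ is less than (2/q)|A|²|B|². Equivalently, Σ_{ξ∈F_q*} N(ξ) < 2(q−1)|A|²|B|²/q, where N(ξ) counts such quadruples. -/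
/-!
Split the solutions of `a₁ + ξ b₁ = a₂ + ξ b₂` according to whether `b₁ = b₂`. Those with
`b₁ = b₂` are the diagonal quadruples, `|A||B|` of them for each `ξ`. A quadruple with `b₁ ≠ b₂`
solves the equation for at most one `ξ`, and for `ξ ≠ 0` it also has `a₁ ≠ a₂`; so over all
`ξ ≠ 0` there are at most `|A|(|A|-1)|B|(|B|-1)` of them. The resulting bound
`(q-1)|A||B| + |A|(|A|-1)|B|(|B|-1)` is below `2(q-1)|A|²|B|²/q` once `|A||B| > q`.
-/

open Finset

section Collisions

variable {R : Type*} [CommRing R] [DecidableEq R]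

def collisions (A B : Finset R) (ξ : R) : Finset ((R × R) × R × R) :=
  ((A ×ˢ B) ×ˢ (A ×ˢ B)).filter (fun p => p.1.1 + ξ * p.1.2 = p.2.1 + ξ * p.2.2)

section

variable {A B : Finset R} {ξ ξ' : R} {p : (R × R) × R × R}

theorem filter_snd_eq_collisions (A B : Finset R) (ξ : R) :
    (collisions A B ξ).filter (fun p => p.1.2 = p.2.2) = (A ×ˢ B).diag := by
  ext ⟨⟨a₁, b₁⟩, a₂, b₂⟩
  simp only [collisions, mem_filter, mem_product, mem_diag, Prod.mk.injEq]
  constructor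
  · rintro ⟨⟨⟨hab₁, -⟩, heq⟩, rfl⟩
    exact ⟨hab₁, add_right_cancel heq, rfl⟩
  · rintro ⟨hab₁, rfl, rfl⟩
    exact ⟨⟨⟨hab₁, hab₁⟩, rfl⟩, rfl⟩

theorem eq_of_mem_collisions [NoZeroDivisors R] (hp : p ∈ collisions A B ξ)
    (hp' : p ∈ collisions A B ξ') (hb : p.1.2 ≠ p.2.2) : ξ = ξ' := by
  have h : ξ * (p.1.2 - p.2.2) = ξ' * (p.1.2 - p.2.2) := by
    linear_combination (mem_filter.1 hp).2 - (mem_filter.1 hp').2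
  exact mul_right_cancel₀ (sub_ne_zero.2 hb) h

theorem fst_ne_of_mem_collisions [NoZeroDivisors R] (hξ : ξ ≠ 0) (hp : p ∈ collisions A B ξ)
    (hb : p.1.2 ≠ p.2.2) : p.1.1 ≠ p.2.1 := by
  intro ha
  have h : ξ * p.1.2 = ξ * p.2.2 := by
    linear_combination (mem_filter.1 hp).2 - ha
  exact hb (mul_left_cancel₀ hξ h)

theorem sum_card_filter_snd_ne_collisions_le [NoZeroDivisors R] (A B T : Finset R)
    (hT : 0 ∉ T) :
    ∑ ξ ∈ T, #((collisions A B ξ).filter (fun p => p.1.2 ≠ p.2.2)) ≤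
      #A.offDiag * #B.offDiag := by
  have hdisj : (T : Set R).PairwiseDisjoint
      (fun ξ => (collisions A B ξ).filter (fun p => p.1.2 ≠ p.2.2)) := by
    intro ξ _ ξ' _ hne
    refine disjoint_left.2 fun p hp hp' => hne ?_
    rw [mem_filter] at hp hp'
    exact eq_of_mem_collisions hp.1 hp'.1 hp.2
  rw [← card_biUnion hdisj, ← card_product]
  refine card_le_card_of_injOn (fun p => ((p.1.1, p.2.1), (p.1.2, p.2.2))) ?_ ?_
  · intro p hp
    simp only [coe_biUnion, mem_coe, Set.mem_iUnion, mem_filter] at hp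
    obtain ⟨ξ, hξ, hp, hb⟩ := hp
    have ha := fst_ne_of_mem_collisions (ne_of_mem_of_not_mem hξ hT) hp hb
    simp only [collisions, mem_filter, mem_product] at hp
    simp only [mem_coe, mem_product, mem_offDiag]
    exact ⟨⟨hp.1.1.1, hp.1.2.1, ha⟩, hp.1.1.2, hp.1.2.2, hb⟩
  · rintro ⟨⟨a₁, b₁⟩, a₂, b₂⟩ - ⟨⟨a₁', b₁'⟩, a₂', b₂'⟩ - h
    simp only [Prod.mk.injEq] at h ⊢
    tauto

theorem sum_card_collisions_le [NoZeroDivisors R] (A B T : Finset R) (hT : 0 ∉ T) :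
    ∑ ξ ∈ T, #(collisions A B ξ) ≤ #T * (#A * #B) + #A.offDiag * #B.offDiag := by
  calc ∑ ξ ∈ T, #(collisions A B ξ)
      = ∑ ξ ∈ T, (#((collisions A B ξ).filter (fun p => p.1.2 = p.2.2)) +
          #((collisions A B ξ).filter (fun p => p.1.2 ≠ p.2.2))) := by
        simp only [card_filter_add_card_filter_not]
    _ = #T * (#A * #B) +
          ∑ ξ ∈ T, #((collisions A B ξ).filter (fun p => p.1.2 ≠ p.2.2)) := by
        simp only [sum_add_distrib, filter_snd_eq_collisions, diag_card, card_product,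
          sum_const, smul_eq_mul]
    _ ≤ #T * (#A * #B) + #A.offDiag * #B.offDiag := by
        gcongr
        exact sum_card_filter_snd_ne_collisions_le A B T hT

end

end Collisions

theorem collision_bound_lt (q a b : ℕ) (hq : 2 ≤ q) (h : q < a * b) :
    (((q - 1) * (a * b) + (a * a - a) * (b * b - b) : ℕ) : ℚ) <
      2 * ((q : ℚ) - 1) * (a : ℚ) ^ 2 * (b : ℚ) ^ 2 / q := by
  have ha : 1 ≤ a := Nat.pos_of_ne_zero (by rintro rfl; simp at h)
  have hb : 1 ≤ b := Nat.pos_of_ne_zero (by rintro rfl; simp at h)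
  have hab : 3 ≤ a + b := by
    by_contra! hab
    obtain rfl : a = 1 := by omega
    obtain rfl : b = 1 := by omega
    omega
  push_cast [Nat.cast_sub (by omega : 1 ≤ q), Nat.cast_sub (Nat.le_mul_self a),
    Nat.cast_sub (Nat.le_mul_self b)]
  rw [lt_div_iff₀ (by positivity)]
  have hq : (2 : ℚ) ≤ q := by exact_mod_cast hq
  have h : (q : ℚ) + 1 ≤ a * b := by exact_mod_cast h
  have hab : (3 : ℚ) ≤ a + b := by exact_mod_cast hab
  have hgap : 0 < ((q : ℚ) - 2) * (a * b) + q * (a + b) - q ^ 2 := by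
    nlinarith [mul_nonneg (sub_nonneg.2 hq) (sub_nonneg.2 h)]
  -- the difference of the two sides is `ab` times `hgap`'s left-hand side
  nlinarith [mul_pos (by positivity : (0 : ℚ) < a * b) hgap]

theorem stmt_17 {F : Type*} [Field F] [Fintype F] [DecidableEq F] (q : ℕ)
    (hq : Fintype.card F = q) (A B : Finset F) (h : q < A.card * B.card) :
    ∑ ξ ∈ Finset.univ.filter (fun x : F => x ≠ 0),
        (((((A ×ˢ B) ×ˢ (A ×ˢ B)).filter
          (fun p => p.1.1 + ξ * p.1.2 = p.2.1 + ξ * p.2.2)).card : ℚ)) <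
      2 * ((q : ℚ) - 1) * (A.card : ℚ) ^ 2 * (B.card : ℚ) ^ 2 / q := by
  have hq2 : 2 ≤ q := hq ▸ Fintype.one_lt_card
  have hT : #(univ.filter fun x : F => x ≠ 0) = q - 1 := by
    rw [filter_ne' univ 0, card_erase_of_mem (mem_univ 0), card_univ, hq]
  have hsum := sum_card_collisions_le A B _ (by simp : (0 : F) ∉ univ.filter (· ≠ 0))
  rw [hT, offDiag_card, offDiag_card] at hsum
  calc ∑ ξ ∈ univ.filter (fun x : F => x ≠ 0), (#(collisions A B ξ) : ℚ)
      = ((∑ ξ ∈ univ.filter (fun x : F => x ≠ 0), #(collisions A B ξ) : ℕ) : ℚ) := by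
        push_cast; rfl
    _ ≤ _ := by exact_mod_cast hsum
    _ < _ := collision_bound_lt q _ _ hq2 h
end

section
/- Let F_q be a finite field, A, B ⊆ F_q, and ξ ∈ F_q* with |A − ξB| > q/2. Suppose there exist a ∈ −A with a ∉ A + A, and a representation −a = (a₁ + a₂) + ξ(b₁ + b₂) with a₁, a₂ ∈ A, b₁, b₂ ∈ B. Then b₁ + b₂ ≠ 0 and ξ = −(a₁ + a₂ + a₃)/(b₁ + b₂) where a₃ = −a ∈ A; moreover (b₁+b₂)(A − ξB) ⊆ 5·(AB) and thus 10·(AB) = F_q. -/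
/-!
Since `a ∉ A + A`, the relation `a = (a₁ + a₂) + ξ (b₁ + b₂)` forces `b₁ + b₂ ≠ 0`, and with
`a₃ = -a ∈ A` it reads `ξ (b₁ + b₂) = -(a₁ + a₂ + a₃)`. Hence
`(b₁ + b₂)(a' - ξ b') = a' b₁ + a' b₂ + a₁ b' + a₂ b' + a₃ b'` lies in `5·(AB)`. The dilate
`(b₁ + b₂)(A - ξB)` has more than `q/2` elements, so it doubles to all of `F_q`, which gives
`10·(AB) = F_q`.
-/

open Finset

theorem Finset.exists_add_eq_of_card_lt {G : Type*} [AddGroup G] [Fintype G] [DecidableEq G]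
    (S : Finset G) (hS : Fintype.card G < 2 * #S) (x : G) : ∃ s ∈ S, ∃ t ∈ S, s + t = x := by
  have hcard : #(S.image (x - ·)) = #S := card_image_of_injective _ sub_right_injective
  obtain ⟨s, hs⟩ := inter_nonempty_of_card_lt_card_add_card (subset_univ S)
    (subset_univ (S.image (x - ·))) (by rw [card_univ, hcard]; omega)
  obtain ⟨hsS, hsx⟩ := mem_inter.mp hs
  obtain ⟨t, htS, rfl⟩ := mem_image.mp hsx
  exact ⟨x - t, hsS, t, htS, sub_add_cancel x t⟩

/-- `x ∈ n·(AB)`, the `n`-fold sumset of the product set `AB`. -/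
def IsSumOfProducts {R : Type*} [CommSemiring R] (A B : Set R) (n : ℕ) (x : R) : Prop :=
  ∃ c d : Fin n → R, (∀ i, c i ∈ A) ∧ (∀ i, d i ∈ B) ∧ x = ∑ i, c i * d i

namespace IsSumOfProducts

variable {R : Type*} [CommSemiring R] {A B : Set R} {m n : ℕ} {x y : R}

theorem add (hx : IsSumOfProducts A B m x) (hy : IsSumOfProducts A B n y) :
    IsSumOfProducts A B (m + n) (x + y) := by
  obtain ⟨c, d, hc, hd, rfl⟩ := hx
  obtain ⟨c', d', hc', hd', rfl⟩ := hy
  refine ⟨Fin.append c c', Fin.append d d', Fin.addCases (by simpa) (by simpa),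
    Fin.addCases (by simpa) (by simpa), ?_⟩
  simp [Fin.sum_univ_add]

end IsSumOfProducts

theorem isSumOfProducts_mul_sub_mul {R : Type*} [CommRing R] {A B : Set R} {a₁ a₂ a₃ b₁ b₂ ξ : R}
    (ha₁ : a₁ ∈ A) (ha₂ : a₂ ∈ A) (ha₃ : a₃ ∈ A) (hb₁ : b₁ ∈ B) (hb₂ : b₂ ∈ B)
    (hξ : ξ * (b₁ + b₂) = -(a₁ + a₂ + a₃)) {a b : R} (ha : a ∈ A) (hb : b ∈ B) :
    IsSumOfProducts A B 5 ((b₁ + b₂) * (a - ξ * b)) := by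
  refine ⟨![a, a, a₁, a₂, a₃], ![b₁, b₂, b, b, b], ?_, ?_, ?_⟩
  · intro i; fin_cases i <;> assumption
  · intro i; fin_cases i <;> assumption
  · simp only [Fin.sum_univ_five, Matrix.cons_val]
    linear_combination -b * hξ

theorem isSumOfProducts_add_self_of_card_lt {F : Type*} [CommRing F] [Fintype F] [DecidableEq F]
    {A B : Set F} {n : ℕ} (S : Finset F) (hS : Fintype.card F < 2 * #S)
    (hSAB : ∀ s ∈ S, IsSumOfProducts A B n s) (x : F) : IsSumOfProducts A B (n + n) x := by
  obtain ⟨s, hs, t, ht, rfl⟩ := S.exists_add_eq_of_card_lt hS x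
  exact (hSAB s hs).add (hSAB t ht)

open Pointwise in
theorem stmt_18_general {F : Type*} [Field F] [Fintype F] [DecidableEq F] (q : ℕ)
    (hq : Fintype.card F = q) (A B : Finset F) (ξ : F)
    (hcard : (q : ℚ) / 2 < (((A ×ˢ B).image (fun p => p.1 - ξ * p.2)).card : ℚ))
    (a : F) (ha : a ∈ -A) (hna : a ∉ A + A)
    (a₁ : F) (ha₁ : a₁ ∈ A) (a₂ : F) (ha₂ : a₂ ∈ A)
    (b₁ : F) (hb₁ : b₁ ∈ B) (b₂ : F) (hb₂ : b₂ ∈ B)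
    (hrep : a = (a₁ + a₂) + ξ * (b₁ + b₂)) :
    b₁ + b₂ ≠ 0 ∧ ξ = -(a₁ + a₂ + (-a)) / (b₁ + b₂) ∧
    (∀ a' ∈ A, ∀ b' ∈ B, ∃ c d : Fin 5 → F, (∀ i, c i ∈ A) ∧ (∀ i, d i ∈ B) ∧
      (b₁ + b₂) * (a' - ξ * b') = ∑ i, c i * d i) ∧
    (∀ x : F, ∃ c d : Fin 10 → F, (∀ i, c i ∈ A) ∧ (∀ i, d i ∈ B) ∧
      x = ∑ i, c i * d i) := by
  have hb : b₁ + b₂ ≠ 0 := fun h ↦ hna (mem_add.mpr ⟨a₁, ha₁, a₂, ha₂, by rw [hrep, h]; ring⟩)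
  have hξ : ξ * (b₁ + b₂) = -(a₁ + a₂ + -a) := by linear_combination -hrep
  have hfive : ∀ a' ∈ A, ∀ b' ∈ B, IsSumOfProducts (A : Set F) B 5 ((b₁ + b₂) * (a' - ξ * b')) :=
    fun a' ha' b' hb' ↦ isSumOfProducts_mul_sub_mul ha₁ ha₂
      (mem_neg'.mp ha) hb₁ hb₂ hξ ha' hb'
  refine ⟨hb, eq_div_of_mul_eq hb hξ, hfive, ?_⟩
  set S := (A ×ˢ B).image (fun p => p.1 - ξ * p.2)
  have hS : #(S.image ((b₁ + b₂) * ·)) = #S := card_image_of_injective _ (mul_right_injective₀ hb)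
  refine isSumOfProducts_add_self_of_card_lt (n := 5) (S.image ((b₁ + b₂) * ·)) ?_ ?_
  · rw [hS, hq]
    exact_mod_cast (by linarith : (q : ℚ) < 2 * #S)
  · simp only [S, mem_image, mem_product]
    rintro _ ⟨_, ⟨⟨a', b'⟩, ⟨ha', hb'⟩, rfl⟩, rfl⟩
    exact hfive a' ha' b' hb'

open Pointwise in
theorem stmt_18 {F : Type*} [Field F] [Fintype F] [DecidableEq F] (q : ℕ)
    (hq : Fintype.card F = q) (A B : Finset F) (ξ : F) (hξ : ξ ≠ 0)
    (hcard : (q : ℚ) / 2 < (((A ×ˢ B).image (fun p => p.1 - ξ * p.2)).card : ℚ))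
    (a : F) (ha : a ∈ -A) (hna : a ∉ A + A)
    (a₁ : F) (ha₁ : a₁ ∈ A) (a₂ : F) (ha₂ : a₂ ∈ A)
    (b₁ : F) (hb₁ : b₁ ∈ B) (b₂ : F) (hb₂ : b₂ ∈ B)
    (hrep : a = (a₁ + a₂) + ξ * (b₁ + b₂)) :
    b₁ + b₂ ≠ 0 ∧ ξ = -(a₁ + a₂ + (-a)) / (b₁ + b₂) ∧
    (∀ a' ∈ A, ∀ b' ∈ B, ∃ c d : Fin 5 → F, (∀ i, c i ∈ A) ∧ (∀ i, d i ∈ B) ∧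
      (b₁ + b₂) * (a' - ξ * b') = ∑ i, c i * d i) ∧
    (∀ x : F, ∃ c d : Fin 10 → F, (∀ i, c i ∈ A) ∧ (∀ i, d i ∈ B) ∧
      x = ∑ i, c i * d i) :=
  stmt_18_general q hq A B ξ hcard a ha hna a₁ ha₁ a₂ ha₂ b₁ hb₁ b₂ hb₂ hrep
end
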